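/- arXiv:2104.14504 — 6 statements merged into one kernel-verified Lean document; each statement's English description precedes it below -/
import Mathlib

section
/- Let g and m be positive integers, let r > 0 and δ ∈ (0,1), let p be a real number with p ≥ 1, and let w be a weight vector on Fin g. For each i ∈ Fin g let (Ω_i, μ_i) be a probability space and let f_i : Ω_i → ℝ be measurable with 0 ≤ f_i(ω) ≤ r for all ω. Let S i := ∫ f_i dμ_i, and for a sample x drawn from the product measure ⊗_{i ∈ Fin g} μ_i^{⊗ m} (i.e., m independent draws from each of the g distributions, all mutually independent), let Ŝ(x) i := (1/m) ∑_{j ∈ Fin m} f_i (x i j). Then with probability at least 1 − δ over the sample x, |M_p(S; w) − M_p(Ŝ(x); w)| ≤ r * sqrt(log(2*g/δ) / (2*m)). -/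
/-!
For `p ≥ 1` the power mean of a nonnegative vector `S` is the `ℓ^p` norm of `(w i ^ (1/p) * S i)`,
so by the reverse triangle inequality, and because the weights sum to `1`, it moves by at most
`maxᵢ |S i - Ŝ i|` when `S` is replaced by `Ŝ`. Hoeffding's inequality bounds the probability
that one group's empirical mean is off by `t` by `2 exp (-2 m t² / r²)`, which equals `δ / g`
for the chosen `t`, and a union bound over the `g` groups concludes.
-/

open scoped BigOperators
open MeasureTheory

/-- The weighted power mean `M_p(S; w)`. For `p ≠ 0` it is
`(∑ i, w i * (S i)^p)^(1/p)`; for `p = 0` it is `exp (∑ i, w i * log (S i))`. -/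
noncomputable def pmean (g : ℕ) (p : ℝ) (w S : Fin g → ℝ) : ℝ :=
  if p = 0 then Real.exp (∑ i, w i * Real.log (S i))
  else (∑ i, w i * S i ^ p) ^ (1 / p)

open ProbabilityTheory Real

section Hoeffding

variable {α : Type*} [MeasurableSpace α] (ν : Measure α) [IsProbabilityMeasure ν] {m : ℕ}
  {φ : α → ℝ} {a b t : ℝ}

lemma measureReal_pi_mean_sub_integral_ge_le (hm : 0 < m) (hφ : Measurable φ)
    (hφab : ∀ x, φ x ∈ Set.Icc a b) (ht : 0 ≤ t) :
    (Measure.pi fun _ : Fin m => ν).real {y | t ≤ (1 / (m : ℝ)) * ∑ j, φ (y j) - ∫ x, φ x ∂ν} ≤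
      exp (-2 * m * t ^ 2 / (b - a) ^ 2) := by
  have hsubG (j : Fin m) : HasSubgaussianMGF (fun y : Fin m → α => φ (y j) - ∫ x, φ x ∂ν)
      ((‖b - a‖₊ / 2) ^ 2) (Measure.pi fun _ : Fin m => ν) := by
    have hmean : ∫ y, φ (y j) ∂(Measure.pi fun _ : Fin m => ν) = ∫ x, φ x ∂ν := by
      conv_rhs => rw [← (measurePreserving_eval (fun _ : Fin m => ν) j).map_eq]
      exact (integral_map (measurable_pi_apply j).aemeasurable hφ.aestronglyMeasurable).symm
    simpa only [hmean] using hasSubgaussianMGF_of_mem_Icc (μ := Measure.pi fun _ : Fin m => ν)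
      (by fun_prop : Measurable fun y : Fin m → α => φ (y j)).aemeasurable
      (ae_of_all _ fun y => hφab (y j))
  have hindep : iIndepFun (fun (j : Fin m) (y : Fin m → α) => φ (y j) - ∫ x, φ x ∂ν)
      (Measure.pi fun _ : Fin m => ν) :=
    iIndepFun_pi (X := fun _ x => φ x - ∫ x, φ x ∂ν) fun _ => by fun_prop
  have hevent : {y : Fin m → α | t ≤ (1 / (m : ℝ)) * ∑ j, φ (y j) - ∫ x, φ x ∂ν} =
      {y | m * t ≤ ∑ j, (φ (y j) - ∫ x, φ x ∂ν)} := by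
    ext y
    simp only [Set.mem_ofPred_eq, Finset.sum_sub_distrib, Finset.sum_const, Finset.card_univ,
      Fintype.card_fin, nsmul_eq_mul]
    rw [← mul_le_mul_iff_of_pos_left (Nat.cast_pos.2 hm : (0 : ℝ) < m)]
    field_simp
  rw [hevent]
  refine (HasSubgaussianMGF.measure_sum_ge_le_of_iIndepFun hindep (fun j _ => hsubG j)
    (by positivity)).trans_eq ?_
  congr 1
  simp only [Finset.sum_const, Finset.card_univ, Fintype.card_fin, nsmul_eq_mul]
  push_cast
  rw [Real.norm_eq_abs, div_pow, sq_abs]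
  generalize b - a = d
  field_simp

lemma measureReal_pi_abs_integral_sub_mean_ge_le (hm : 0 < m) (hφ : Measurable φ)
    (hφab : ∀ x, φ x ∈ Set.Icc a b) (ht : 0 ≤ t) :
    (Measure.pi fun _ : Fin m => ν).real {y | t ≤ |∫ x, φ x ∂ν - (1 / (m : ℝ)) * ∑ j, φ (y j)|} ≤
      2 * exp (-2 * m * t ^ 2 / (b - a) ^ 2) := by
  have hneg (x : α) : -φ x ∈ Set.Icc (-b) (-a) := ⟨neg_le_neg (hφab x).2, neg_le_neg (hφab x).1⟩
  calc _ ≤ (Measure.pi fun _ : Fin m => ν).real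
        ({y | t ≤ (1 / (m : ℝ)) * ∑ j, φ (y j) - ∫ x, φ x ∂ν} ∪
          {y | t ≤ (1 / (m : ℝ)) * ∑ j, -φ (y j) - ∫ x, -φ x ∂ν}) := by
        refine measureReal_mono (fun y hy => ?_)
        simp only [Set.mem_ofPred_eq, Set.mem_union, integral_neg, Finset.sum_neg_distrib,
          mul_neg] at hy ⊢
        rcases le_abs'.1 hy with h | h
        · left; linarith
        · right; linarith
    _ ≤ _ := measureReal_union_le _ _
    _ ≤ exp (-2 * m * t ^ 2 / (b - a) ^ 2) + exp (-2 * m * t ^ 2 / (-a - -b) ^ 2) :=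
        add_le_add (measureReal_pi_mean_sub_integral_ge_le ν hm hφ hφab ht)
          (measureReal_pi_mean_sub_integral_ge_le (φ := fun x => -φ x) ν hm hφ.neg hneg ht)
    _ = _ := by ring_nf

end Hoeffding

section PowerMean

variable {g : ℕ} {p t : ℝ} {w S T : Fin g → ℝ}

lemma pmean_abs_eq_norm (hp : 0 < p) (hw : ∀ i, 0 ≤ w i) (v : Fin g → ℝ) :
    pmean g p w (fun i => |v i|) =
      ‖WithLp.toLp (ENNReal.ofReal p) (fun i => w i ^ (1 / p) * v i)‖ := by
  rw [pmean, if_neg hp.ne', PiLp.norm_eq_sum (by rwa [ENNReal.toReal_ofReal hp.le]),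
    ENNReal.toReal_ofReal hp.le]
  congr 1
  refine Finset.sum_congr rfl fun i _ => ?_
  rw [PiLp.toLp_apply, Real.norm_eq_abs, abs_mul, abs_of_nonneg (rpow_nonneg (hw i) _),
    mul_rpow (rpow_nonneg (hw i) _) (abs_nonneg _), ← rpow_mul (hw i), one_div_mul_cancel hp.ne',
    rpow_one]

lemma pmean_le_of_forall_le (hp : 0 < p) (hw : ∀ i, 0 ≤ w i) (hw1 : ∑ i, w i = 1)
    (hS : ∀ i, 0 ≤ S i) (hSt : ∀ i, S i ≤ t) : pmean g p w S ≤ t := by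
  have hg : 0 < g := Nat.pos_of_ne_zero (by rintro rfl; simp at hw1)
  have ht : 0 ≤ t := (hS ⟨0, hg⟩).trans (hSt _)
  have hsum : ∑ i, w i * S i ^ p ≤ t ^ p := calc
    _ ≤ ∑ i, w i * t ^ p := Finset.sum_le_sum fun i _ =>
        mul_le_mul_of_nonneg_left (rpow_le_rpow (hS i) (hSt i) hp.le) (hw i)
    _ = t ^ p := by rw [← Finset.sum_mul, hw1, one_mul]
  rw [pmean, if_neg hp.ne']
  calc _ ≤ (t ^ p) ^ (1 / p) := rpow_le_rpow
        (Finset.sum_nonneg fun i _ => mul_nonneg (hw i) (rpow_nonneg (hS i) _)) hsum (by positivity)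
    _ = t := by rw [← rpow_mul ht, mul_one_div_cancel hp.ne', rpow_one]

lemma abs_pmean_sub_pmean_le (hp : 1 ≤ p) (hw : ∀ i, 0 ≤ w i) (hw1 : ∑ i, w i = 1)
    (hS : ∀ i, 0 ≤ S i) (hT : ∀ i, 0 ≤ T i) (hST : ∀ i, |S i - T i| ≤ t) :
    |pmean g p w S - pmean g p w T| ≤ t := by
  have hp0 : 0 < p := one_pos.trans_le hp
  have : Fact (1 ≤ ENNReal.ofReal p) := ⟨by simpa using hp⟩
  have hnorm (V : Fin g → ℝ) (hV : ∀ i, 0 ≤ V i) :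
      pmean g p w V = ‖WithLp.toLp (ENNReal.ofReal p) (fun i => w i ^ (1 / p) * V i)‖ := by
    simpa only [abs_of_nonneg (hV _)] using pmean_abs_eq_norm hp0 hw V
  rw [hnorm S hS, hnorm T hT]
  calc _ ≤ ‖WithLp.toLp (ENNReal.ofReal p) (fun i => w i ^ (1 / p) * S i) -
        WithLp.toLp (ENNReal.ofReal p) (fun i => w i ^ (1 / p) * T i)‖ := abs_norm_sub_norm_le _ _
    _ = pmean g p w (fun i => |S i - T i|) := by
        rw [← WithLp.toLp_sub, pmean_abs_eq_norm hp0 hw]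
        simp only [Pi.sub_def, mul_sub]
    _ ≤ t := pmean_le_of_forall_le hp0 hw hw1 (fun i => abs_nonneg _) hST

end PowerMean

lemma one_sub_sum_measureReal_le_measureReal_pi {ι : Type*} [Fintype ι] {α : ι → Type*}
    [∀ i, MeasurableSpace (α i)] (μ : ∀ i, Measure (α i)) [∀ i, IsProbabilityMeasure (μ i)]
    {B : ∀ i, Set (α i)} (hB : ∀ i, MeasurableSet (B i)) :
    1 - ∑ i, (μ i).real (B i) ≤ (Measure.pi μ).real {x | ∀ i, x i ∉ B i} := by
  have hcompl : {x : ∀ i, α i | ∀ i, x i ∉ B i} = (⋃ i, Function.eval i ⁻¹' B i)ᶜ := by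
    ext x
    simp
  rw [hcompl, measureReal_compl (MeasurableSet.iUnion fun i => measurable_pi_apply i (hB i)),
    probReal_univ]
  gcongr
  calc _ ≤ ∑ i, (Measure.pi μ).real (Function.eval i ⁻¹' B i) := measureReal_iUnion_fintype_le _
    _ = _ := Finset.sum_congr rfl fun i _ =>
        (measurePreserving_eval μ i).measureReal_preimage (hB i).nullMeasurableSet

/-- Estimation of the power-mean malfare of per-group expectations with the Hoeffding bound:
with probability at least `1 − δ` over `m` i.i.d. samples from each of the `g` group
distributions, the empirical power mean is within `r √(log(2g/δ)/(2m))` of the true one. -/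
theorem pmean_hoeffding_estimation (g m : ℕ) (hg : 0 < g) (hm : 0 < m)
    (r δ : ℝ) (hr : 0 < r) (hδ : δ ∈ Set.Ioo (0:ℝ) 1)
    (p : ℝ) (hp : 1 ≤ p)
    (w : Fin g → ℝ) (hw : ∀ i, 0 ≤ w i) (hw1 : ∑ i, w i = 1)
    (Ω : Fin g → Type*) [∀ i, MeasurableSpace (Ω i)]
    (μ : ∀ i, Measure (Ω i)) [∀ i, IsProbabilityMeasure (μ i)]
    (f : ∀ i, Ω i → ℝ) (hf : ∀ i, Measurable (f i))
    (hfb : ∀ i ω, f i ω ∈ Set.Icc (0:ℝ) r) :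
    ENNReal.ofReal (1 - δ) ≤
      (Measure.pi (fun i : Fin g => Measure.pi (fun _ : Fin m => μ i)))
        {x | |pmean g p w (fun i => ∫ ω, f i ω ∂(μ i)) -
              pmean g p w (fun i => (1 / (m : ℝ)) * ∑ j : Fin m, f i (x i j))| ≤
              r * Real.sqrt (Real.log (2 * g / δ) / (2 * m))} := by
  obtain ⟨hδ0, hδ1⟩ := hδ
  have hg' : (0 : ℝ) < g := Nat.cast_pos.2 hg
  set t := r * sqrt (log (2 * g / δ) / (2 * m))
  have hlog : 0 ≤ log (2 * g / δ) :=
    log_nonneg ((le_div_iff₀ hδ0).2 (by linarith [(Nat.one_le_cast (α := ℝ)).2 hg]))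
  have hrate : 2 * exp (-2 * m * t ^ 2 / (r - 0) ^ 2) = δ / g := by
    rw [mul_pow, sq_sqrt (by positivity), sub_zero]
    field_simp
    rw [exp_neg, exp_log (by positivity)]
    field_simp
  let bad (i : Fin g) : Set (Fin m → Ω i) :=
    {y | t ≤ |∫ ω, f i ω ∂(μ i) - (1 / (m : ℝ)) * ∑ j, f i (y j)|}
  refine ENNReal.ofReal_le_of_le_toReal ?_
  calc 1 - δ = 1 - ∑ _i : Fin g, δ / g := by simp [mul_div_cancel₀ _ hg'.ne']
    _ ≤ 1 - ∑ i, (Measure.pi fun _ : Fin m => μ i).real (bad i) := by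
        gcongr with i
        exact (measureReal_pi_abs_integral_sub_mean_ge_le (μ i) hm (hf i) (hfb i)
          (by positivity)).trans_eq hrate
    _ ≤ _ := one_sub_sum_measureReal_le_measureReal_pi _ fun i =>
        measurableSet_le measurable_const (by fun_prop)
    _ ≤ _ := measureReal_mono fun x hx => abs_pmean_sub_pmean_le hp hw hw1
        (fun i => integral_nonneg fun ω => (hfb i ω).1)
        (fun i => mul_nonneg (by positivity) (Finset.sum_nonneg fun j _ => (hfb i (x i j)).1))
        fun i => (not_le.1 (hx i)).le
end

section
/- Fix a sample size m ∈ ℕ, an accuracy ε with 0 < ε < 1/2, a failure probability δ ∈ (0,1), and a bias q ∈ (0,1] with sqrt(q) > 2*ε. Let A : (Fin m → Bool) → ℝ be any estimator. Suppose A estimates the Nash social welfare to accuracy ε with confidence 1 − δ on both the instance with q' = 0 and the instance with q' = q; that is: (a) with probability at least 1 − δ over x drawn from the m-fold product of Bernoulli(0), |A(x)| ≤ ε, and (b) with probability at least 1 − δ over x drawn from the m-fold product of Bernoulli(q), |A(x) − sqrt(q)| ≤ ε. Then (1 − q)^m ≤ δ; equivalently, m * log(1/(1−q)) ≥ log(1/δ)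 whenever q < 1. -/
/-!
Under `Bernoulli(0)` the sample is almost surely the all-false vector, so an estimator that is
`ε`-accurate there with positive probability outputs a value within `ε` of `0` at that vector.
As `√q > 2ε`, this value is more than `ε` away from `√q`, so on the `Bernoulli(q)` instance
the estimator fails at least on the all-false vector, an event of probability `(1 - q)^m`.
-/

open MeasureTheory

noncomputable def bernoulliMeasure (q : ℝ) : Measure Bool :=
  ENNReal.ofReal q • Measure.dirac true + ENNReal.ofReal (1 - q) • Measure.dirac false

section Singleton

variable {α : Type*} [MeasurableSpace α] [MeasurableSingletonClass α] (μ : Measure α)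
  [IsProbabilityMeasure μ] {s : Set α} {x : α}

lemma measure_le_one_sub_measure_singleton_of_notMem (hx : x ∉ s) : μ s ≤ 1 - μ {x} :=
  (measure_mono (Set.subset_compl_singleton_iff.mpr hx)).trans_eq
    (prob_compl_eq_one_sub (measurableSet_singleton x))

lemma mem_of_measure_singleton_eq_one (hx : μ {x} = 1) (hs : μ s ≠ 0) : x ∈ s := by
  by_contra h
  exact hs (by simpa [hx] using measure_le_one_sub_measure_singleton_of_notMem μ h)

end Singleton

lemma bernoulliMeasure_singleton_false (q : ℝ) :
    bernoulliMeasure q {false} = ENNReal.ofReal (1 - q) := by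
  simp [bernoulliMeasure, Measure.dirac_apply' _ (measurableSet_singleton false)]

lemma isProbabilityMeasure_bernoulliMeasure {q : ℝ} (h0 : 0 ≤ q) (h1 : q ≤ 1) :
    IsProbabilityMeasure (bernoulliMeasure q) := by
  constructor
  simp only [bernoulliMeasure, Measure.coe_add, Measure.coe_smul, Pi.add_apply, Pi.smul_apply,
    measure_univ, smul_eq_mul, mul_one]
  rw [← ENNReal.ofReal_add h0 (by linarith), add_sub_cancel, ENNReal.ofReal_one]

instance (q : ℝ) : IsFiniteMeasure (bernoulliMeasure q) := by
  constructor
  simp [bernoulliMeasure]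

lemma pi_bernoulliMeasure_singleton_const_false {ι : Type*} [Fintype ι] (q : ℝ) :
    Measure.pi (fun _ : ι => bernoulliMeasure q) {fun _ => false} =
      ENNReal.ofReal (1 - q) ^ Fintype.card ι := by
  rw [← Set.univ_pi_singleton, Measure.pi_pi]
  simp [bernoulliMeasure_singleton_false]

lemma le_of_ofReal_one_sub_le_one_sub_ofReal {a δ : ℝ} (ha : 0 ≤ a) (hδ : δ < 1)
    (h : ENNReal.ofReal (1 - δ) ≤ 1 - ENNReal.ofReal a) : a ≤ δ := by
  rw [← ENNReal.ofReal_one, ← ENNReal.ofReal_sub _ ha, ENNReal.ofReal_le_ofReal_iff'] at h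
  rcases h with h | h <;> linarith

lemma Real.log_one_div_le_mul_log_one_div_of_pow_le {a δ : ℝ} {m : ℕ} (ha : 0 < a)
    (h : a ^ m ≤ δ) : Real.log (1 / δ) ≤ m * Real.log (1 / a) := by
  have := Real.log_le_log (pow_pos ha m) h
  rw [Real.log_pow] at this
  simp only [one_div, Real.log_inv]
  linarith

theorem nsw_estimation_lower_bound_general (m : ℕ) (ε δ q : ℝ)
    (hδ : δ ∈ Set.Ioo (0:ℝ) 1)
    (hq0 : 0 < q) (hq1 : q ≤ 1) (hq : 2 * ε < Real.sqrt q)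
    (A : (Fin m → Bool) → ℝ)
    (ha : ENNReal.ofReal (1 - δ) ≤
      (Measure.pi (fun _ : Fin m => bernoulliMeasure 0)) {x | |A x| ≤ ε})
    (hb : ENNReal.ofReal (1 - δ) ≤
      (Measure.pi (fun _ : Fin m => bernoulliMeasure q)) {x | |A x - Real.sqrt q| ≤ ε}) :
    (1 - q) ^ m ≤ δ ∧
      (q < 1 → Real.log (1 / δ) ≤ (m : ℝ) * Real.log (1 / (1 - q))) := by
  have := isProbabilityMeasure_bernoulliMeasure (le_refl (0 : ℝ)) zero_le_one
  have := isProbabilityMeasure_bernoulliMeasure hq0.le hq1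
  have h_near_zero : (fun _ => false) ∈ {x : Fin m → Bool | |A x| ≤ ε} :=
    mem_of_measure_singleton_eq_one (Measure.pi fun _ => bernoulliMeasure 0)
      (by rw [pi_bernoulliMeasure_singleton_const_false]; simp)
      ((ENNReal.ofReal_pos.mpr (by linarith [hδ.2])).trans_le ha).ne'
  have h_far_sqrt : (fun _ => false) ∉ {x : Fin m → Bool | |A x - Real.sqrt q| ≤ ε} :=
    fun h_near_sqrt => by
      rw [Set.mem_ofPred_eq, abs_le] at h_near_zero h_near_sqrt
      linarith [h_near_zero.2, h_near_sqrt.1]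
  have h_pow : (1 - q) ^ m ≤ δ := by
    refine le_of_ofReal_one_sub_le_one_sub_ofReal (pow_nonneg (by linarith) m) hδ.2 ?_
    have h_fail := measure_le_one_sub_measure_singleton_of_notMem
      (Measure.pi (fun _ : Fin m => bernoulliMeasure q)) h_far_sqrt
    rw [pi_bernoulliMeasure_singleton_const_false, Fintype.card_fin] at h_fail
    rw [ENNReal.ofReal_pow (by linarith)]
    exact hb.trans h_fail
  exact ⟨h_pow, fun hq_lt => Real.log_one_div_le_mul_log_one_div_of_pow_le (by linarith) h_pow⟩

/-- Sample-complexity lower bound for estimating the Nash social welfare `√q` of a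
two-group instance where group 1 has constant utility `1` and group 2 has
`Bernoulli(q)` utility: any estimator that is `ε`-accurate with confidence `1 − δ`
on both the `q' = 0` and `q' = q` instances (with `√q > 2ε`) forces `(1−q)^m ≤ δ`,
i.e. `m log(1/(1−q)) ≥ log(1/δ)` whenever `q < 1`. -/
theorem nsw_estimation_lower_bound (m : ℕ) (ε δ q : ℝ)
    (hε : 0 < ε) (hε' : ε < 1 / 2) (hδ : δ ∈ Set.Ioo (0:ℝ) 1)
    (hq0 : 0 < q) (hq1 : q ≤ 1) (hq : 2 * ε < Real.sqrt q)
    (A : (Fin m → Bool) → ℝ)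
    (ha : ENNReal.ofReal (1 - δ) ≤
      (Measure.pi (fun _ : Fin m => bernoulliMeasure 0)) {x | |A x| ≤ ε})
    (hb : ENNReal.ofReal (1 - δ) ≤
      (Measure.pi (fun _ : Fin m => bernoulliMeasure q)) {x | |A x - Real.sqrt q| ≤ ε}) :
    (1 - q) ^ m ≤ δ ∧
      (q < 1 → Real.log (1 / δ) ≤ (m : ℝ) * Real.log (1 / (1 - q))) :=
  nsw_estimation_lower_bound_general m ε δ q hδ hq0 hq1 hq A ha hb
end

section
/- Let g be a positive integer, let p be any real number, let w be a weight vector on Fin g, and let S : Fin g → ℝ be nonnegative. Then the affinely shifted power mean converges to the weighted arithmetic mean: the function β ↦ M_p(fun i => S i + β; w) − β tends to ∑ i, w i * S i as β → ∞, and the function β ↦ M_p(fun i => β − S i; w) − β tends to −(∑ i, w i * S i) as β → ∞. -/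
open scoped BigOperators

/-!
`M_p` is positively homogeneous and `M_p(1; w) = 1`, so
`M_p(β + c; w) - β = β (M_p(1 + c/β; w) - 1)`, a difference quotient of `t ↦ M_p(1 + c t; w)`
at `0` with step `1/β`. Its derivative there is `∑ i, w i * c i` for every `p`, which is the
limit as `β → ∞`.
-/

open Filter Real Topology

section PowerMean

variable {g : ℕ} {p : ℝ} {w : Fin g → ℝ}

lemma pmean_const_one (hw1 : ∑ i, w i = 1) : pmean g p w (fun _ => 1) = 1 := by
  unfold pmean
  split_ifs <;> simp [hw1]

lemma pmean_const_mul (hw : ∀ i, 0 ≤ w i) (hw1 : ∑ i, w i = 1) {a : Fin g → ℝ}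
    (ha : ∀ i, 0 < a i) {β : ℝ} (hβ : 0 < β) :
    pmean g p w (fun i => β * a i) = β * pmean g p w a := by
  unfold pmean
  split_ifs with hp
  · have hlog : ∑ i, w i * log (β * a i) = log β + ∑ i, w i * log (a i) := by
      simp only [log_mul hβ.ne' (ha _).ne', mul_add, Finset.sum_add_distrib, ← Finset.sum_mul,
        hw1, one_mul]
    rw [hlog, exp_add, exp_log hβ]
  · have hpow : ∑ i, w i * (β * a i) ^ p = β ^ p * ∑ i, w i * a i ^ p := by
      simp only [mul_rpow hβ.le (ha _).le, Finset.mul_sum, mul_left_comm]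
    have hsum : 0 ≤ ∑ i, w i * a i ^ p :=
      Finset.sum_nonneg fun i _ => mul_nonneg (hw i) (rpow_nonneg (ha i).le p)
    rw [hpow, mul_rpow (rpow_nonneg hβ.le p) hsum, ← rpow_mul hβ.le, mul_one_div_cancel hp,
      rpow_one]

lemma hasDerivAt_pmean_one_add_mul (hw1 : ∑ i, w i = 1) (c : Fin g → ℝ) :
    HasDerivAt (fun t => pmean g p w (fun i => 1 + c i * t)) (∑ i, w i * c i) 0 := by
  have hlin : ∀ i, HasDerivAt (fun t : ℝ => 1 + c i * t) (c i) 0 := fun i => by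
    simpa using ((hasDerivAt_id (0 : ℝ)).const_mul (c i)).const_add 1
  unfold pmean
  split_ifs with hp
  · have hsum : HasDerivAt (fun t => ∑ i, w i * log (1 + c i * t)) (∑ i, w i * c i) 0 := by
      simpa using HasDerivAt.fun_sum fun i _ => ((hlin i).log (by simp)).const_mul (w i)
    simpa using hsum.exp
  · have hsum : HasDerivAt (fun t => ∑ i, w i * (1 + c i * t) ^ p)
        ((∑ i, w i * c i) * p) 0 := by
      simpa [Finset.sum_mul, mul_assoc] using HasDerivAt.fun_sum fun i _ =>
        ((hlin i).rpow_const (p := p) (Or.inl (by simp))).const_mul (w i)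
    simpa [hw1, mul_assoc, mul_inv_cancel₀ hp] using
      hsum.rpow_const (p := 1 / p) (Or.inl (by simp [hw1]))

lemma tendsto_pmean_add_sub (hw : ∀ i, 0 ≤ w i) (hw1 : ∑ i, w i = 1) (c : Fin g → ℝ) :
    Tendsto (fun β : ℝ => pmean g p w (fun i => β + c i) - β) atTop
      (𝓝 (∑ i, w i * c i)) := by
  have hslope := (hasDerivAt_pmean_one_add_mul (p := p) hw1 c).tendsto_slope_zero_right.comp
    tendsto_inv_atTop_nhdsGT_zero
  refine hslope.congr' ?_
  filter_upwards [eventually_gt_atTop 0, eventually_all.2 fun i => eventually_gt_atTop (-c i)]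
    with β hβ hc
  have hpos : ∀ i, 0 < 1 + c i * β⁻¹ := fun i => by
    rw [← div_eq_mul_inv, one_add_div hβ.ne']
    exact div_pos (by linarith [hc i]) hβ
  have hshift : (fun i => β + c i) = fun i => β * (1 + c i * β⁻¹) := by
    funext i
    field_simp
  simp only [Function.comp_apply, zero_add, mul_zero, add_zero, pmean_const_one hw1, smul_eq_mul,
    inv_inv, hshift, pmean_const_mul hw hw1 hpos hβ]
  ring

end PowerMean

theorem pmean_shift_tendsto_arith_general (g : ℕ) (p : ℝ)
    (w S : Fin g → ℝ) (hw : ∀ i, 0 ≤ w i) (hw1 : ∑ i, w i = 1) :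
    Filter.Tendsto (fun β : ℝ => pmean g p w (fun i => S i + β) - β)
      Filter.atTop (nhds (∑ i, w i * S i)) ∧
    Filter.Tendsto (fun β : ℝ => pmean g p w (fun i => β - S i) - β)
      Filter.atTop (nhds (-(∑ i, w i * S i))) := by
  constructor
  · simpa only [add_comm] using tendsto_pmean_add_sub hw hw1 S
  · simpa only [sub_eq_add_neg, mul_neg, Finset.sum_neg_distrib] using
      tendsto_pmean_add_sub hw hw1 (fun i => -S i)

/-- Affinely shifted power means degenerate to the weighted arithmetic mean:
`M_p(S + β; w) − β → ∑ i, w i * S i` and `M_p(β − S; w) − β → −∑ i, w i * S i`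
as `β → ∞`, for every `p`. -/
theorem pmean_shift_tendsto_arith (g : ℕ) (hg : 0 < g) (p : ℝ)
    (w S : Fin g → ℝ) (hw : ∀ i, 0 ≤ w i) (hw1 : ∑ i, w i = 1)
    (hS : ∀ i, 0 ≤ S i) :
    Filter.Tendsto (fun β : ℝ => pmean g p w (fun i => S i + β) - β)
      Filter.atTop (nhds (∑ i, w i * S i)) ∧
    Filter.Tendsto (fun β : ℝ => pmean g p w (fun i => β - S i) - β)
      Filter.atTop (nhds (-(∑ i, w i * S i))) :=
  pmean_shift_tendsto_arith_general g p w S hw hw1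
end

section
/- Let g be a positive integer, let p be a real number with p ≥ 1, let w be a weight vector on Fin g, let H be a nonempty set, and let R, R̂ : H → Fin g → ℝ assign to each hypothesis nonnegative per-group true and empirical risk vectors. Fix ε_est ≥ 0 and ε_opt ≥ 0, and suppose: (i) uniform deviation control: for every h ∈ H and every i ∈ Fin g, |R̂ h i − R h i| ≤ ε_est; and (ii) ĥ ∈ H is an ε_opt-approximate empirical malfare minimizer: for every h ∈ H, M_p(R̂ ĥ; w) ≤ M_p(R̂ h; w) + ε_opt. Then for every h* ∈ H, the true malfare of ĥ satisfies M_p(R ĥ; w) ≤ M_p(R h*; w) + ε_opt + 2 * ε_est. In particular, when ε_est = ε/2 and ε_opt = 0, empirical malfare minimization is ε-optimal in true malfare. -/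
open scoped BigOperators

/-- Sup-norm contraction for the weighted power mean with `p ≥ 1`: if `S ≤ T + ε`
componentwise (with everything nonnegative), then `M_p(S) ≤ M_p(T) + ε`. -/
lemma pmean_lipschitz (g : ℕ) (p : ℝ) (hp : 1 ≤ p)
    (w : Fin g → ℝ) (hw : ∀ i, 0 ≤ w i) (hw1 : ∑ i, w i = 1)
    (S T : Fin g → ℝ) (hS : ∀ i, 0 ≤ S i) (hT : ∀ i, 0 ≤ T i)
    (ε : ℝ) (hε : 0 ≤ ε) (hle : ∀ i, S i ≤ T i + ε) :
    pmean g p w S ≤ pmean g p w T + ε := by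
  have hp0 : 0 < p := lt_of_lt_of_le one_pos hp
  have hpne : p ≠ 0 := ne_of_gt hp0
  simp only [pmean, if_neg hpne]
  set f : Fin g → ℝ := fun i => w i ^ (1/p) * T i with hf
  set gg : Fin g → ℝ := fun i => w i ^ (1/p) * ε with hgg
  have hfnn : ∀ i, 0 ≤ f i := fun i => mul_nonneg (Real.rpow_nonneg (hw i) _) (hT i)
  have hgnn : ∀ i, 0 ≤ gg i := fun i => mul_nonneg (Real.rpow_nonneg (hw i) _) hε
  have hwpow : ∀ i, (w i ^ (1/p)) ^ p = w i := by
    intro i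
    rw [← Real.rpow_mul (hw i), one_div, inv_mul_cancel₀ hpne, Real.rpow_one]
  have hstep1 : ∑ i, w i * S i ^ p ≤ ∑ i, (f i + gg i) ^ p := by
    apply Finset.sum_le_sum
    intro i _
    have h1 : w i * S i ^ p = (w i ^ (1/p) * S i) ^ p := by
      rw [Real.mul_rpow (Real.rpow_nonneg (hw i) _) (hS i), hwpow]
    rw [h1]
    apply Real.rpow_le_rpow (mul_nonneg (Real.rpow_nonneg (hw i) _) (hS i)) _ hp0.le
    have : w i ^ (1/p) * S i ≤ w i ^ (1/p) * (T i + ε) :=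
      mul_le_mul_of_nonneg_left (hle i) (Real.rpow_nonneg (hw i) _)
    simpa [f, gg, mul_add] using this
  have hsum1 : 0 ≤ ∑ i, w i * S i ^ p :=
    Finset.sum_nonneg fun i _ => mul_nonneg (hw i) (Real.rpow_nonneg (hS i) _)
  have hstep2 : (∑ i, w i * S i ^ p) ^ (1/p) ≤ (∑ i, (f i + gg i) ^ p) ^ (1/p) :=
    Real.rpow_le_rpow hsum1 hstep1 (by positivity)
  have hmink : (∑ i, (f i + gg i) ^ p) ^ (1/p) ≤
      (∑ i, f i ^ p) ^ (1/p) + (∑ i, gg i ^ p) ^ (1/p) := by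
    have := Real.Lp_add_le Finset.univ f gg hp
    simpa [abs_of_nonneg, hfnn, hgnn, fun i => abs_of_nonneg (add_nonneg (hfnn i) (hgnn i)),
      fun i => abs_of_nonneg (hfnn i), fun i => abs_of_nonneg (hgnn i)] using this
  have hfT : ∑ i, f i ^ p = ∑ i, w i * T i ^ p := by
    apply Finset.sum_congr rfl
    intro i _
    rw [Real.mul_rpow (Real.rpow_nonneg (hw i) _) (hT i), hwpow]
  have hgε : (∑ i, gg i ^ p) ^ (1/p) = ε := by
    have : ∑ i, gg i ^ p = ε ^ p := by
      have : ∀ i, gg i ^ p = w i * ε ^ p := by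
        intro i
        rw [Real.mul_rpow (Real.rpow_nonneg (hw i) _) hε, hwpow]
      rw [Finset.sum_congr rfl fun i _ => this i, ← Finset.sum_mul, hw1, one_mul]
    rw [this, ← Real.rpow_mul hε, mul_one_div, div_self hpne, Real.rpow_one]
  rw [hfT, hgε] at hmink
  linarith

/-- Excess true malfare of an approximate empirical malfare minimizer decomposes as
optimization error plus twice the (uniform) estimation error. -/
theorem emm_generalization (g : ℕ) (hg : 0 < g) (p : ℝ) (hp : 1 ≤ p)
    (w : Fin g → ℝ) (hw : ∀ i, 0 ≤ w i) (hw1 : ∑ i, w i = 1)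
    (H : Type*) (hH : Nonempty H)
    (R Rhat : H → Fin g → ℝ)
    (hR : ∀ h i, 0 ≤ R h i) (hRhat : ∀ h i, 0 ≤ Rhat h i)
    (εest εopt : ℝ) (hεest : 0 ≤ εest) (hεopt : 0 ≤ εopt)
    (hdev : ∀ (h : H) (i : Fin g), |Rhat h i - R h i| ≤ εest)
    (hhat : H)
    (hemm : ∀ h : H, pmean g p w (Rhat hhat) ≤ pmean g p w (Rhat h) + εopt) :
    ∀ hstar : H,
      pmean g p w (R hhat) ≤ pmean g p w (R hstar) + εopt + 2 * εest := by
  intro hstar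
  have h1 : pmean g p w (R hhat) ≤ pmean g p w (Rhat hhat) + εest := by
    apply pmean_lipschitz g p hp w hw hw1 _ _ (hR hhat) (hRhat hhat) εest hεest
    intro i
    have := abs_le.1 (hdev hhat i)
    linarith [this.1]
  have h2 := hemm hstar
  have h3 : pmean g p w (Rhat hstar) ≤ pmean g p w (R hstar) + εest := by
    apply pmean_lipschitz g p hp w hw hw1 _ _ (hRhat hstar) (hR hstar) εest hεest
    intro i
    have := abs_le.1 (hdev hstar i)
    linarith [this.2]
  linarith
end

section
/- Fix p ∈ ℝ. Suppose the weighted p-power mean satisfies the Pigou–Dalton transfer principle universally: for every positive integer g, every weight vector w on Fin g with 0 < w i for all i, and all strictly positive S, S' : Fin g → ℝ such that, writing μ = ∑ i, w i * S i, one has μ = ∑ i, w i * S' i and |μ − S' i| ≤ |μ − S i| for all i, it holds that M_p(S'; w) ≥ M_p(S; w). Then p ≤ 1. -/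
open scoped BigOperators

/-- If the weighted `p`-power mean satisfies the Pigou–Dalton transfer principle
(for all group counts, positive weight vectors, and strictly positive sentiment vectors),
then `p ≤ 1`. -/
theorem pigou_dalton_implies_p_le_one (p : ℝ)
    (hPD : ∀ (g : ℕ), 0 < g → ∀ w : Fin g → ℝ, (∀ i, 0 < w i) → ∑ i, w i = 1 →
      ∀ S S' : Fin g → ℝ, (∀ i, 0 < S i) → (∀ i, 0 < S' i) →
        (∑ i, w i * S i = ∑ i, w i * S' i) →
        (∀ i, |(∑ j, w j * S j) - S' i| ≤ |(∑ j, w j * S j) - S i|) →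
        pmean g p w S ≤ pmean g p w S') :
    p ≤ 1 := by
  by_contra hp
  push_neg at hp
  have hp0 : p ≠ 0 := by positivity
  have hple := hPD 2 (by norm_num) ![1/2, 1/2] (by intro i; fin_cases i <;> norm_num)
    (by simp [Fin.sum_univ_two]; norm_num) ![1, 3] ![2, 2]
    (by intro i; fin_cases i <;> norm_num)
    (by intro i; fin_cases i <;> norm_num)
    (by simp [Fin.sum_univ_two]; norm_num)
    (by intro i; fin_cases i <;> simp [Fin.sum_univ_two] <;> norm_num)
  -- strict convexity gives 2^p < 1/2*1^p + 1/2*3^p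
  have hconv := (strictConvexOn_rpow hp).2 (Set.mem_Ici.2 (by norm_num : (0:ℝ) ≤ 1))
    (Set.mem_Ici.2 (by norm_num : (0:ℝ) ≤ 3)) (by norm_num)
    (by norm_num : (0:ℝ) < 1/2) (by norm_num : (0:ℝ) < 1/2) (by norm_num)
  have hkey : (2:ℝ) ^ p < 2⁻¹ + 2⁻¹ * (3:ℝ) ^ p := by
    norm_num [smul_eq_mul] at hconv
    linarith
  have hpinv : 0 < 1 / p := by positivity
  have hmono : ((2:ℝ) ^ p) ^ (1/p) < (2⁻¹ + 2⁻¹ * (3:ℝ) ^ p) ^ (1/p) :=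
    Real.rpow_lt_rpow (by positivity) hkey hpinv
  have h2 : ((2:ℝ) ^ p) ^ (1/p) = 2 := by
    rw [← Real.rpow_mul (by norm_num), one_div, mul_inv_cancel₀ hp0, Real.rpow_one]
  have hS : pmean 2 p ![1/2, 1/2] ![1, 3] = (2⁻¹ + 2⁻¹ * (3:ℝ) ^ p) ^ (1/p) := by
    simp [pmean, hp0, Fin.sum_univ_two, Real.one_rpow]
  have hS' : pmean 2 p ![1/2, 1/2] ![2, 2] = 2 := by
    have hsum : (∑ i, (![1/2, 1/2] : Fin 2 → ℝ) i * (![2, 2] : Fin 2 → ℝ) i ^ p) = (2:ℝ) ^ p := by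
      simp [Fin.sum_univ_two]; ring
    simp only [pmean, if_neg hp0, hsum, h2]
  rw [hS, hS'] at hple
  rw [h2] at hmono
  linarith
end

section
/- Fix p ∈ ℝ. Suppose the weighted p-power mean satisfies the anti-Pigou–Dalton transfer principle universally: for every positive integer g, every weight vector w on Fin g with 0 < w i for all i, and all strictly positive S, S' : Fin g → ℝ such that, writing μ = ∑ i, w i * S i, one has μ = ∑ i, w i * S' i and |μ − S' i| ≤ |μ − S i| for all i, it holds that M_p(S'; w) ≤ M_p(S; w). Then p ≥ 1. -/
open scoped BigOperators

/-!
For `p < 1` the `p`-mean lies strictly below the arithmetic mean on every non-constant positive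
vector: for `0 < p < 1` by strict concavity of `x ↦ x ^ p`, for `p = 0` by strict concavity of
`log`, and for `p < 0` because Jensen for `log` at the points `S i ^ p` gives `M_p ≤ M_0`.
Moving the two entries of `S = (1, 3)` to their mean `2` satisfies the transfer hypothesis but
raises `M_p` from below `2` to `2`.
-/

open Finset Real

section

variable {g : ℕ} {p : ℝ} {w S : Fin g → ℝ}

lemma pmean_zero (w S : Fin g → ℝ) : pmean g 0 w S = exp (∑ i, w i * log (S i)) := if_pos rfl

lemma pmean_of_ne_zero (hp : p ≠ 0) (w S : Fin g → ℝ) :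
    pmean g p w S = (∑ i, w i * S i ^ p) ^ (1 / p) := if_neg hp

lemma pmean_const (hw : ∑ i, w i = 1) {c : ℝ} (hc : 0 < c) : pmean g p w (fun _ ↦ c) = c := by
  have weighted_const (x : ℝ) : ∑ i, w i * x = x := by rw [← sum_mul, hw, one_mul]
  rcases eq_or_ne p 0 with rfl | hp
  · rw [pmean_zero, weighted_const, exp_log hc]
  · rw [pmean_of_ne_zero hp, weighted_const, one_div, rpow_rpow_inv hc.le hp]

lemma pmean_zero_lt_arith_mean (hw : ∀ i, 0 < w i) (hw₁ : ∑ i, w i = 1) (hS : ∀ i, 0 < S i)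
    (hS' : ∃ i j, S i ≠ S j) : pmean g 0 w S < ∑ i, w i * S i := by
  obtain ⟨i, j, hij⟩ := hS'
  have jensen := strictConcaveOn_log_Ioi.lt_map_sum (t := univ) (fun i _ ↦ hw i) hw₁
    (fun i _ ↦ hS i) ⟨i, mem_univ _, j, mem_univ _, hij⟩
  simp only [smul_eq_mul] at jensen
  rw [pmean_zero]
  exact (lt_log_iff_exp_lt (sum_pos (fun i _ ↦ mul_pos (hw i) (hS i)) ⟨i, mem_univ _⟩)).1 jensen

lemma pmean_le_pmean_zero_of_neg (hp : p < 0) (hw : ∀ i, 0 ≤ w i) (hw₁ : ∑ i, w i = 1)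
    (hS : ∀ i, 0 < S i) : pmean g p w S ≤ pmean g 0 w S := by
  have jensen := strictConcaveOn_log_Ioi.concaveOn.le_map_sum (t := univ) (fun i _ ↦ hw i) hw₁
    (fun i _ ↦ rpow_pos_of_pos (hS i) p)
  simp only [smul_eq_mul, log_rpow (hS _), mul_left_comm _ p, ← mul_sum] at jensen
  have hpos : 0 < ∑ i, w i * S i ^ p := by
    obtain ⟨i, -, hi⟩ := exists_ne_zero_of_sum_ne_zero (hw₁.trans_ne one_ne_zero)
    exact sum_pos' (fun j _ ↦ mul_nonneg (hw j) (rpow_pos_of_pos (hS j) p).le)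
      ⟨i, mem_univ _, mul_pos ((hw i).lt_of_ne' hi) (rpow_pos_of_pos (hS i) p)⟩
  rw [pmean_of_ne_zero hp.ne, pmean_zero, rpow_def_of_pos hpos, exp_le_exp, ← div_eq_mul_one_div,
    div_le_iff_of_neg hp, mul_comm]
  exact jensen

lemma pmean_lt_arith_mean_of_pos_of_lt_one (hp₀ : 0 < p) (hp₁ : p < 1) (hw : ∀ i, 0 < w i)
    (hw₁ : ∑ i, w i = 1) (hS : ∀ i, 0 ≤ S i) (hS' : ∃ i j, S i ≠ S j) :
    pmean g p w S < ∑ i, w i * S i := by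
  obtain ⟨i, j, hij⟩ := hS'
  have jensen := (strictConcaveOn_rpow hp₀ hp₁).lt_map_sum (t := univ) (fun i _ ↦ hw i) hw₁
    (fun i _ ↦ hS i) ⟨i, mem_univ _, j, mem_univ _, hij⟩
  simp only [smul_eq_mul] at jensen
  have hA : 0 ≤ ∑ i, w i * S i := sum_nonneg fun i _ ↦ mul_nonneg (hw i).le (hS i)
  calc pmean g p w S = (∑ i, w i * S i ^ p) ^ (1 / p) := pmean_of_ne_zero hp₀.ne' w S
    _ < ((∑ i, w i * S i) ^ p) ^ (1 / p) :=
      rpow_lt_rpow (sum_nonneg fun i _ ↦ mul_nonneg (hw i).le (rpow_nonneg (hS i) p)) jensen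
        (one_div_pos.2 hp₀)
    _ = ∑ i, w i * S i := by rw [one_div, rpow_rpow_inv hA hp₀.ne']

lemma pmean_lt_arith_mean_of_lt_one (hp : p < 1) (hw : ∀ i, 0 < w i) (hw₁ : ∑ i, w i = 1)
    (hS : ∀ i, 0 < S i) (hS' : ∃ i j, S i ≠ S j) : pmean g p w S < ∑ i, w i * S i := by
  rcases lt_trichotomy p 0 with hp₀ | rfl | hp₀
  · exact (pmean_le_pmean_zero_of_neg hp₀ (fun i ↦ (hw i).le) hw₁ hS).trans_lt
      (pmean_zero_lt_arith_mean hw hw₁ hS hS')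
  · exact pmean_zero_lt_arith_mean hw hw₁ hS hS'
  · exact pmean_lt_arith_mean_of_pos_of_lt_one hp₀ hp hw hw₁ (fun i ↦ (hS i).le) hS'

end

/-- If the weighted `p`-power mean satisfies the anti-Pigou–Dalton transfer principle
(for all group counts, positive weight vectors, and strictly positive sentiment vectors),
then `p ≥ 1`. -/
theorem anti_pigou_dalton_implies_one_le_p (p : ℝ)
    (hAPD : ∀ (g : ℕ), 0 < g → ∀ w : Fin g → ℝ, (∀ i, 0 < w i) → ∑ i, w i = 1 →
      ∀ S S' : Fin g → ℝ, (∀ i, 0 < S i) → (∀ i, 0 < S' i) →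
        (∑ i, w i * S i = ∑ i, w i * S' i) →
        (∀ i, |(∑ j, w j * S j) - S' i| ≤ |(∑ j, w j * S j) - S i|) →
        pmean g p w S' ≤ pmean g p w S) :
    1 ≤ p := by
  by_contra! hp
  set w : Fin 2 → ℝ := fun _ ↦ 1 / 2
  set S : Fin 2 → ℝ := ![1, 3]
  have hw : ∀ i, 0 < w i := fun _ ↦ by norm_num [w]
  have hw₁ : ∑ i, w i = 1 := by norm_num [w]
  have hS : ∀ i, 0 < S i := fun i ↦ by fin_cases i <;> norm_num [S]
  have hmean : ∑ i, w i * S i = 2 := by norm_num [w, S]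
  have htransfer := hAPD 2 two_pos w hw hw₁ S (fun _ ↦ 2) hS (fun _ ↦ two_pos)
    (by rw [hmean, ← sum_mul, hw₁, one_mul])
    (fun i ↦ by fin_cases i <;> norm_num [hmean, S])
  have hlt := pmean_lt_arith_mean_of_lt_one hp hw hw₁ hS ⟨0, 1, by norm_num [S]⟩
  rw [pmean_const hw₁ two_pos] at htransfer
  rw [hmean] at hlt
  exact htransfer.not_gt hlt
end
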